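/- arXiv:2510.02299 — 5 statements merged into one kernel-verified Lean document; each statement's English description precedes it below -/
import Mathlib

section
/- First Cousin Principle: Let 1 ≤ k < n, let φ : (ℝⁿ)ᵏ → ℝ be an alternating k-linear map of comass at most one, and let e₁, …, eₙ be an orthonormal basis of ℝⁿ. If φ(e₁, …, e_k) = 1, then for every i ∈ {1, …, k} and every j ∈ {1, …, n−k} one has φ(e₁, …, e_{i−1}, e_{k+j}, e_{i+1}, …, e_k) = 0; equivalently, φ vanishes on every first cousin ξ_{ij} = e_{k+j} ∧ (e_i ⌟ (e₁ ∧ ⋯ ∧ e_k)) of the simple unit k-vector e₁ ∧ ⋯ ∧ e_k. -/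
open scoped RealInnerProductSpace

/-- **First Cousin Principle** (Lemma 4.1).
Let `1 ≤ k < n`, let `φ` be an alternating `k`-linear map (`k`-covector) on `ℝⁿ` of
comass at most one, and let `e` be an orthonormal basis `e 0, …, e (n-1)` of `ℝⁿ`.
If `φ (e 0, …, e (k-1)) = 1`, then replacing any one of the arguments `e i` (`i < k`)
by any `e (k+j)` (`j < n-k`) yields the value `0`; i.e. `φ` vanishes on every first
cousin `ξ_{ij} = e_{k+j} ∧ (e_i ⌟ (e₀ ∧ ⋯ ∧ e_{k-1}))` of the simple unit `k`-vector
`e₀ ∧ ⋯ ∧ e_{k-1}`. -/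
theorem first_cousin_principle {n k : ℕ} (hk : 1 ≤ k) (hkn : k < n)
    (φ : AlternatingMap ℝ (EuclideanSpace ℝ (Fin n)) ℝ (Fin k))
    (hcomass : ∀ v : Fin k → EuclideanSpace ℝ (Fin n), Orthonormal ℝ v → |φ v| ≤ 1)
    (e : OrthonormalBasis (Fin n) ℝ (EuclideanSpace ℝ (Fin n)))
    (hφ : φ (fun i : Fin k => e (Fin.castLE hkn.le i)) = 1)
    (i : Fin k) (j : Fin (n - k)) :
    φ (Function.update (fun i' : Fin k => e (Fin.castLE hkn.le i')) i
        (e ⟨k + (j : ℕ), by have := j.isLt; omega⟩)) = 0 := by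
  set u : Fin k → EuclideanSpace ℝ (Fin n) := fun i' => e (Fin.castLE hkn.le i') with hu
  set m : Fin n := ⟨k + (j : ℕ), by have := j.isLt; omega⟩ with hm
  set c : ℝ := φ (Function.update u i (e m)) with hc
  show c = 0
  have he : ∀ p q : Fin n, ⟪e p, e q⟫ = if p = q then 1 else 0 :=
    orthonormal_iff_ite.mp e.orthonormal
  have hmne : ∀ l : Fin k, m ≠ Fin.castLE hkn.le l := by
    intro l hl
    have : (m : ℕ) = (l : ℕ) := congrArg Fin.val hl
    simp [hm] at this
    omega
  have hs2 : (0:ℝ) < 1 + c ^ 2 := by positivity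
  have hs : (0:ℝ) < Real.sqrt (1 + c ^ 2) := Real.sqrt_pos.2 hs2
  have hsq : Real.sqrt (1 + c ^ 2) ^ 2 = 1 + c ^ 2 := Real.sq_sqrt hs2.le
  set a : ℝ := 1 / Real.sqrt (1 + c ^ 2) with ha
  set b : ℝ := c / Real.sqrt (1 + c ^ 2) with hb
  have hab : a ^ 2 + b ^ 2 = 1 := by
    rw [ha, hb, div_pow, div_pow, hsq]
    field_simp
  set z : EuclideanSpace ℝ (Fin n) := a • e (Fin.castLE hkn.le i) + b • e m with hz
  set v : Fin k → EuclideanSpace ℝ (Fin n) := Function.update u i z with hv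
  -- orthonormality of v
  have hon : Orthonormal ℝ v := by
    rw [orthonormal_iff_ite]
    intro p q
    rcases eq_or_ne p i with rfl | hp
    · rcases eq_or_ne q p with rfl | hq
      · simp only [hv, Function.update_self, hz]
        rw [real_inner_add_add_self]
        simp only [real_inner_smul_left, real_inner_smul_right, he]
        rw [if_neg (Ne.symm (hmne q))]
        simp only [if_true, mul_zero, mul_one]
        nlinarith [hab]
      · simp only [hv, Function.update_self, Function.update_of_ne hq, hz, hu]
        rw [inner_add_left, real_inner_smul_left, real_inner_smul_left, he, he]
        rw [if_neg (fun h => hq (Fin.castLE_injective _ h).symm), if_neg (hmne q),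
          if_neg (Ne.symm hq)]
        ring
    · rcases eq_or_ne q i with rfl | hq
      · simp only [hv, Function.update_self, Function.update_of_ne hp, hz, hu]
        rw [inner_add_right, real_inner_smul_right, real_inner_smul_right, he, he]
        rw [if_neg (fun h => hp (Fin.castLE_injective _ h)), if_neg (Ne.symm (hmne p)),
          if_neg hp]
        ring
      · simp only [hv, Function.update_of_ne hp, Function.update_of_ne hq, hu]
        rw [he]
        by_cases hpq : p = q
        · simp [hpq]
        · rw [if_neg (fun h => hpq (Fin.castLE_injective _ h)), if_neg hpq]
  -- value of φ on v
  have h2 : Function.update u i (e (Fin.castLE hkn.le i)) = u :=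
    Function.update_eq_self i u
  have hstep : φ v = a * φ u + b * c := by
    rw [hv, hz, AlternatingMap.map_update_add, AlternatingMap.map_update_smul,
      AlternatingMap.map_update_smul, smul_eq_mul, smul_eq_mul, h2, ← hc]
  have hval : φ v = Real.sqrt (1 + c ^ 2) := by
    rw [hstep, hφ, ha, hb,
      show (1:ℝ)/Real.sqrt (1+c^2) * 1 + c/Real.sqrt (1+c^2) * c
        = (1+c^2)/Real.sqrt (1+c^2) by ring,
      Real.div_sqrt]
  have hle := hcomass v hon
  rw [hval, abs_of_pos hs] at hle
  nlinarith [hsq]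
end

section
/- Let 1 ≤ k ≤ n and let φ : (ℝⁿ)ᵏ → ℝ be an alternating k-linear map of comass at most one. Suppose (e₁, …, e_{k−1}, v) is an orthonormal k-tuple in ℝⁿ with φ(e₁, …, e_{k−1}, v) = 1. Then for every unit vector v′ ∈ ℝⁿ that is orthogonal to each of e₁, …, e_{k−1} one has φ(e₁, …, e_{k−1}, v′) = ⟨v′, v⟩, where ⟨·,·⟩ is the Euclidean inner product. (This is the identity established, via the First Cousin Principle, in the proof of the Intersecting Planes Lemma.) -/
open scoped RealInnerProductSpace

variable {F : Type*} [NormedAddCommGroup F] [InnerProductSpace ℝ F]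

lemma orthonormal_snoc' {m : ℕ} {e : Fin m → F} (he : Orthonormal ℝ e)
    {x : F} (hx : ‖x‖ = 1) (hex : ∀ i, ⟪e i, x⟫ = 0) :
    Orthonormal ℝ (Fin.snoc e x : Fin (m + 1) → F) := by
  rw [orthonormal_iff_ite] at he ⊢
  intro i j
  induction i using Fin.lastCases with
  | last =>
    induction j using Fin.lastCases with
    | last => simp [real_inner_self_eq_norm_sq, hx]
    | cast j =>
      have : Fin.last m ≠ Fin.castSucc j := (Fin.castSucc_lt_last j).ne'
      simp only [Fin.snoc_last, Fin.snoc_castSucc, if_neg this]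
      rw [real_inner_comm]; exact hex j
  | cast i =>
    induction j using Fin.lastCases with
    | last =>
      have : Fin.castSucc i ≠ Fin.last m := (Fin.castSucc_lt_last i).ne
      simp [this, hex i]
    | cast j =>
      have := he i j
      simp [Fin.castSucc_inj, this]

/-- The identity established, via the First Cousin Principle, in the proof of the
Intersecting Planes Lemma: if `φ` is a `k`-covector on `ℝⁿ` (`k = m + 1`, `1 ≤ k ≤ n`)
of comass at most one, `(e 0, …, e (m-1), v)` is an orthonormal `k`-tuple with
`φ (e, v) = 1`, then for every unit vector `v'` orthogonal to all the `e i` one has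
`φ (e, v') = ⟪v', v⟫`. -/
theorem cousin_inner_product_formula {n m : ℕ} (hmn : m + 1 ≤ n)
    (φ : AlternatingMap ℝ (EuclideanSpace ℝ (Fin n)) ℝ (Fin (m + 1)))
    (hcomass : ∀ v : Fin (m + 1) → EuclideanSpace ℝ (Fin n),
      Orthonormal ℝ v → |φ v| ≤ 1)
    (e : Fin m → EuclideanSpace ℝ (Fin n)) (v : EuclideanSpace ℝ (Fin n))
    (hON : Orthonormal ℝ (Fin.snoc e v : Fin (m + 1) → EuclideanSpace ℝ (Fin n)))
    (hφ : φ (Fin.snoc e v) = 1)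
    (v' : EuclideanSpace ℝ (Fin n)) (hv' : ‖v'‖ = 1)
    (horth : ∀ i : Fin m, ⟪e i, v'⟫ = 0) :
    φ (Fin.snoc e v') = ⟪v', v⟫ := by
  classical
  have hadd : ∀ x y : EuclideanSpace ℝ (Fin n),
      φ (Fin.snoc e (x + y)) = φ (Fin.snoc e x) + φ (Fin.snoc e y) :=
    fun x y => φ.toMultilinearMap.snoc_add e x y
  have hsmul : ∀ (c : ℝ) (x : EuclideanSpace ℝ (Fin n)),
      φ (Fin.snoc e (c • x)) = c * φ (Fin.snoc e x) :=
    fun c x => φ.toMultilinearMap.snoc_smul e c x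
  have he : Orthonormal ℝ e := by
    have h := hON.comp Fin.castSucc (Fin.castSucc_injective m)
    have heq : (Fin.snoc e v : Fin (m+1) → EuclideanSpace ℝ (Fin n)) ∘ Fin.castSucc = e := by
      funext i; simp [Fin.snoc_castSucc]
    rwa [heq] at h
  have hvnorm : ‖v‖ = 1 := by
    have := hON.1 (Fin.last m)
    simpa [Fin.snoc_last] using this
  have hev : ∀ i, ⟪e i, v⟫ = 0 := by
    intro i
    rw [orthonormal_iff_ite] at hON
    have h := hON i.castSucc (Fin.last m)
    have hne : i.castSucc ≠ Fin.last m := (Fin.castSucc_lt_last i).ne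
    simpa [Fin.snoc_castSucc, Fin.snoc_last, hne] using h
  set a : ℝ := ⟪v, v'⟫ with ha
  set w : EuclideanSpace ℝ (Fin n) := v' - a • v with hw
  have hvw : ⟪v, w⟫ = 0 := by
    rw [hw, inner_sub_right, real_inner_smul_right, real_inner_self_eq_norm_sq, hvnorm, ← ha]
    ring
  have hew : ∀ i, ⟪e i, w⟫ = 0 := by
    intro i
    rw [hw, inner_sub_right, real_inner_smul_right, horth i, hev i]
    ring
  have hkey : φ (Fin.snoc e w) = 0 := by
    by_cases hw0 : w = 0
    · rw [hw0]
      simpa using hsmul 0 w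
    · have hnwpos : (0:ℝ) < ‖w‖ := norm_pos_iff.mpr hw0
      set u : EuclideanSpace ℝ (Fin n) := ‖w‖⁻¹ • w with hu
      have hunorm : ‖u‖ = 1 := by
        rw [hu, norm_smul, norm_inv, Real.norm_eq_abs, abs_of_pos hnwpos,
          inv_mul_cancel₀ hnwpos.ne']
      have hvu : ⟪v, u⟫ = 0 := by rw [hu, real_inner_smul_right, hvw]; ring
      have heu : ∀ i, ⟪e i, u⟫ = 0 := by
        intro i; rw [hu, real_inner_smul_right, hew i]; ring
      set c : ℝ := φ (Fin.snoc e u) with hc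
      have hc0 : c = 0 := by
        set r : ℝ := Real.sqrt (1 + c ^ 2) with hr
        have hr2 : r ^ 2 = 1 + c ^ 2 := Real.sq_sqrt (by positivity)
        have hrpos : 0 < r := Real.sqrt_pos.mpr (by positivity)
        set x : EuclideanSpace ℝ (Fin n) := r⁻¹ • (v + c • u) with hx
        have hnvcu : ‖v + c • u‖ = r := by
          have hsq : ‖v + c • u‖ ^ 2 = 1 + c ^ 2 := by
            rw [norm_add_sq_real, inner_smul_right, norm_smul, hvu, hvnorm, hunorm]
            simp [Real.norm_eq_abs, sq_abs]
          rw [← Real.sqrt_sq (norm_nonneg _), hsq, hr]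
        have hxnorm : ‖x‖ = 1 := by
          rw [hx, norm_smul, hnvcu, norm_inv, Real.norm_eq_abs, abs_of_pos hrpos,
            inv_mul_cancel₀ hrpos.ne']
        have hex : ∀ i, ⟪e i, x⟫ = 0 := by
          intro i
          rw [hx, real_inner_smul_right, inner_add_right, real_inner_smul_right,
            hev i, heu i]
          ring
        have hb := hcomass _ (orthonormal_snoc' he hxnorm hex)
        have hφx : φ (Fin.snoc e x) = r := by
          rw [hx, hsmul, hadd, hsmul, hφ, ← hc]
          have h1 : 1 + c * c = r ^ 2 := by rw [hr2]; ring
          rw [h1, sq]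
          exact inv_mul_cancel_left₀ hrpos.ne' r
        rw [hφx] at hb
        have hr1 : r ≤ 1 := le_of_abs_le hb
        nlinarith [sq_nonneg c, hr2]
      have hwu : w = ‖w‖ • u := by
        rw [hu, smul_inv_smul₀ hnwpos.ne']
      rw [hwu, hsmul, ← hc, hc0, mul_zero]
  have hv'dec : v' = a • v + w := by rw [hw]; abel
  have hfin : φ (Fin.snoc e v') = a := by
    rw [hv'dec, hadd, hsmul, hφ, hkey]; ring
  rw [hfin, ha, real_inner_comm]
end

section
/- Intersecting Planes Lemma (uniqueness of the completing vector): Let 1 ≤ k ≤ n and let φ : (ℝⁿ)ᵏ → ℝ be an alternating k-linear map of comass at most one. Let e₁, …, e_{k−1} be an orthonormal (k−1)-tuple in ℝⁿ, and let v₁, v₂ be unit vectors in ℝⁿ, each orthogonal to all of e₁, …, e_{k−1}. If φ(e₁, …, e_{k−1}, v₁) = 1 and φ(e₁, …, e_{k−1}, v₂) = 1, then v₁ = v₂. -/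
open scoped RealInnerProductSpace

private lemma alt_snoc_smul {n m : ℕ}
    (φ : AlternatingMap ℝ (EuclideanSpace ℝ (Fin n)) ℝ (Fin (m + 1)))
    (e : Fin m → EuclideanSpace ℝ (Fin n)) (c : ℝ) (x : EuclideanSpace ℝ (Fin n)) :
    φ (Fin.snoc e (c • x)) = c * φ (Fin.snoc e x) := by
  have := φ.toMultilinearMap.snoc_smul e c x
  simpa [smul_eq_mul] using this

private lemma alt_snoc_add {n m : ℕ}
    (φ : AlternatingMap ℝ (EuclideanSpace ℝ (Fin n)) ℝ (Fin (m + 1)))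
    (e : Fin m → EuclideanSpace ℝ (Fin n)) (x y : EuclideanSpace ℝ (Fin n)) :
    φ (Fin.snoc e (x + y)) = φ (Fin.snoc e x) + φ (Fin.snoc e y) := by
  have := φ.toMultilinearMap.snoc_add e x y
  simpa using this

/-- **Intersecting Planes Lemma** (uniqueness of the completing vector).
Let `φ` be a `k`-covector on `ℝⁿ` (`k = m + 1`, `1 ≤ k ≤ n`) of comass at most one,
let `e 0, …, e (m-1)` be an orthonormal `(k-1)`-tuple, and let `v₁, v₂` be unit vectors
orthogonal to all the `e i`. If `φ (e, v₁) = 1 = φ (e, v₂)`, then `v₁ = v₂`. -/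
theorem intersecting_planes_unique_vector {n m : ℕ} (hmn : m + 1 ≤ n)
    (φ : AlternatingMap ℝ (EuclideanSpace ℝ (Fin n)) ℝ (Fin (m + 1)))
    (hcomass : ∀ v : Fin (m + 1) → EuclideanSpace ℝ (Fin n),
      Orthonormal ℝ v → |φ v| ≤ 1)
    (e : Fin m → EuclideanSpace ℝ (Fin n)) (v₁ v₂ : EuclideanSpace ℝ (Fin n))
    (hON₁ : Orthonormal ℝ (Fin.snoc e v₁ : Fin (m + 1) → EuclideanSpace ℝ (Fin n)))
    (hON₂ : Orthonormal ℝ (Fin.snoc e v₂ : Fin (m + 1) → EuclideanSpace ℝ (Fin n)))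
    (hφ₁ : φ (Fin.snoc e v₁) = 1) (hφ₂ : φ (Fin.snoc e v₂) = 1) :
    v₁ = v₂ := by
  have hv₁ : ‖v₁‖ = 1 := by
    have := hON₁.1 (Fin.last m); simpa using this
  have hv₂ : ‖v₂‖ = 1 := by
    have := hON₂.1 (Fin.last m); simpa using this
  set s : EuclideanSpace ℝ (Fin n) := v₁ + v₂ with hs
  by_cases hs0 : s = 0
  · -- then v₂ = -v₁ and φ (snoc e v₂) = -1, contradiction
    have hv21 : v₂ = (-1 : ℝ) • v₁ := by
      have : v₂ = -v₁ := by
        have := hs0; rw [hs] at this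
        linear_combination (norm := module) this
      simpa using this
    rw [hv21, alt_snoc_smul, hφ₁] at hφ₂
    norm_num at hφ₂
  · have hns : (0 : ℝ) < ‖s‖ := norm_pos_iff.mpr hs0
    set c : ℝ := ‖s‖⁻¹ with hc
    have hcpos : 0 < c := inv_pos.mpr hns
    set w : EuclideanSpace ℝ (Fin n) := c • s with hw
    have hwnorm : ‖w‖ = 1 := by
      rw [hw, norm_smul, hc, Real.norm_eq_abs, abs_of_pos (inv_pos.mpr hns)]
      field_simp
    have hON : Orthonormal ℝ (Fin.snoc e w : Fin (m + 1) → EuclideanSpace ℝ (Fin n)) := by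
      rw [orthonormal_iff_ite] at hON₁ hON₂ ⊢
      intro i j
      induction i using Fin.lastCases with
      | last =>
        induction j using Fin.lastCases with
        | last =>
          simp only [Fin.snoc_last, if_pos rfl]
          rw [real_inner_self_eq_norm_sq, hwnorm]; norm_num
        | cast j =>
          have h1 := hON₁ (Fin.last m) (Fin.castSucc j)
          have h2 := hON₂ (Fin.last m) (Fin.castSucc j)
          simp only [Fin.snoc_last, Fin.snoc_castSucc,
            if_neg (Fin.castSucc_lt_last j).ne'] at h1 h2 ⊢
          rw [hw, hs, inner_smul_left, inner_add_left]
          simp [h1, h2]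
      | cast i =>
        induction j using Fin.lastCases with
        | last =>
          have h1 := hON₁ (Fin.castSucc i) (Fin.last m)
          have h2 := hON₂ (Fin.castSucc i) (Fin.last m)
          simp only [Fin.snoc_last, Fin.snoc_castSucc,
            if_neg (Fin.castSucc_lt_last i).ne] at h1 h2 ⊢
          rw [hw, hs, inner_smul_right, inner_add_right]
          simp [h1, h2]
        | cast j =>
          have h1 := hON₁ (Fin.castSucc i) (Fin.castSucc j)
          simpa [Fin.castSucc_inj] using h1
    have key : φ (Fin.snoc e w) = 2 * c := by
      rw [hw, alt_snoc_smul, hs, alt_snoc_add, hφ₁, hφ₂]; ring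
    have hb := hcomass _ hON
    rw [key, abs_of_pos (by positivity)] at hb
    have hsge : (2 : ℝ) ≤ ‖s‖ := by
      rw [hc] at hb
      nlinarith [mul_inv_cancel₀ hns.ne', hns]
    have hinner : (1 : ℝ) ≤ ⟪v₁, v₂⟫ := by
      have h2 : ‖s‖ ^ 2 = 2 + 2 * ⟪v₁, v₂⟫ := by
        rw [hs, norm_add_sq_real, hv₁, hv₂]; ring
      nlinarith
    have hsub : ‖v₁ - v₂‖ ^ 2 ≤ 0 := by
      rw [norm_sub_sq_real, hv₁, hv₂]; nlinarith
    have hz : ‖v₁ - v₂‖ = 0 :=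
      le_antisymm (by nlinarith [norm_nonneg (v₁ - v₂)]) (norm_nonneg _)
    exact sub_eq_zero.mp (norm_eq_zero.mp hz)
end

section
/- Intersecting Planes Lemma (rigidity of contact planes): Let 1 ≤ k ≤ n and let φ : (ℝⁿ)ᵏ → ℝ be an alternating k-linear map of comass at most one. Let u = (u₁, …, u_k) and w = (w₁, …, w_k) be orthonormal k-tuples in ℝⁿ with φ(u₁, …, u_k) = 1 and φ(w₁, …, w_k) = 1. If the subspace span{u₁, …, u_k} ∩ span{w₁, …, w_k} has dimension at least k − 1, then span{u₁, …, u_k} = span{w₁, …, w_k} and moreover u₁ ∧ ⋯ ∧ u_k = w₁ ∧ ⋯ ∧ w_k as elements of the k-th exterior power of ℝⁿ (i.e. the two oriented k-planes coincide). -/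
/-!
If the planes differ, their intersection `I` has dimension `k - 1`; fix an orthonormal basis `e`
of it. Two orthonormal bases of the same plane differ by a determinant `±1`, so completing `e` by
a unit vector of `span u ⊓ Iᗮ` and flipping its sign gives `a` with `φ (e, a) = 1`, and likewise
`b` in `span w ⊓ Iᗮ`. By the comass bound `x ↦ φ (e, x)` has norm at most one on `Iᗮ`, and in a
strictly convex space such a functional takes the value `1` at only one unit vector. So
`a = b ∈ I ⊓ Iᗮ = 0`, absurd. Once the spans agree, every alternating map changes by the same
factor `d = ±1` from `u` to `w`, and `φ u = φ w = 1` forces `d = 1`.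
-/

open Module Submodule Set

variable {E : Type*} [NormedAddCommGroup E] [InnerProductSpace ℝ E]

noncomputable def Orthonormal.orthonormalBasisSpan {ι : Type*} [Fintype ι] {p : ι → E}
    (hp : Orthonormal ℝ p) : OrthonormalBasis ι ℝ (span ℝ (range p)) :=
  OrthonormalBasis.mk (orthonormal_span hp) <| by
    rw [← (Basis.span hp.linearIndependent).span_eq]
    exact le_of_eq (congrArg (fun v => span ℝ (range v))
      (funext fun i => Basis.span_apply hp.linearIndependent i))

@[simp]
theorem Orthonormal.coe_orthonormalBasisSpan {ι : Type*} [Fintype ι] {p : ι → E}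
    (hp : Orthonormal ℝ p) (i : ι) : (hp.orthonormalBasisSpan i : E) = p i := by
  simp [Orthonormal.orthonormalBasisSpan]

theorem exists_abs_eq_one_forall_alternatingMap_eq_mul {ι : Type*} [Fintype ι] [DecidableEq ι]
    {p q : ι → E} (hp : Orthonormal ℝ p) (hq : Orthonormal ℝ q)
    (hpq : span ℝ (range p) = span ℝ (range q)) :
    ∃ d : ℝ, |d| = 1 ∧ ∀ g : E [⋀^ι]→ₗ[ℝ] ℝ, g q = d * g p := by
  let P := hp.orthonormalBasisSpan
  let Q := hq.orthonormalBasisSpan.map (LinearIsometryEquiv.ofEq _ _ hpq.symm)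
  have hP : (fun i => (P i : E)) = p := by ext; simp [P]
  have hQ : (fun i => (Q i : E)) = q := by ext; simp [Q]
  refine ⟨P.toBasis.det Q, P.det_to_matrix_orthonormalBasis Q, fun g => ?_⟩
  have := congr($((g.compLinearMap (span ℝ (range p)).subtype).eq_smul_basis_det P.toBasis) Q)
  simpa [hP, hQ, mul_comm] using this

theorem AlternatingMap.apply_eq_smul_apply_of_forall_scalar {K N M ι : Type*} [Field K]
    [AddCommGroup N] [Module K N] [AddCommGroup M] [Module K M] {p q : ι → N} {d : K}
    (h : ∀ f : N [⋀^ι]→ₗ[K] K, f q = d * f p) (g : N [⋀^ι]→ₗ[K] M) : g q = d • g p := by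
  rw [← sub_eq_zero, ← Module.forall_dual_apply_eq_zero_iff K]
  intro ℓ
  simpa [sub_eq_zero] using h (ℓ.compAlternatingMap g)

theorem orthonormal_snoc {m : ℕ} {e : Fin m → E} {a : E} (he : Orthonormal ℝ e) (ha : ‖a‖ = 1)
    (hae : a ∈ (span ℝ (range e))ᗮ) : Orthonormal ℝ (Fin.snoc e a : Fin (m + 1) → E) := by
  have hperp (i : Fin m) : inner ℝ (e i) a = 0 :=
    inner_right_of_mem_orthogonal (subset_span (mem_range_self i)) hae
  have hperp' (i : Fin m) : inner ℝ a (e i) = 0 :=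
    inner_left_of_mem_orthogonal (subset_span (mem_range_self i)) hae
  rw [orthonormal_iff_ite] at he ⊢
  intro i j
  cases i using Fin.lastCases <;> cases j using Fin.lastCases <;>
    simp [he, hperp, hperp', ha, Fin.ext_iff,
      (Fin.castSucc_lt_last _).ne, (Fin.castSucc_lt_last _).ne']

theorem exists_mem_orthogonal_norm_eq_one_of_lt {I U : Submodule ℝ E}
    [I.HasOrthogonalProjection] (hIU : I < U) : ∃ a ∈ U, a ∈ Iᗮ ∧ ‖a‖ = 1 := by
  have hne : Iᗮ ⊓ U ≠ ⊥ := fun h => hIU.ne <| by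
    simpa [h] using sup_orthogonal_inf_of_hasOrthogonalProjection hIU.le
  obtain ⟨x, hx, hx0⟩ := exists_mem_ne_zero_of_ne_bot hne
  exact ⟨‖x‖⁻¹ • x, smul_mem _ _ hx.2, smul_mem _ _ hx.1, norm_smul_inv_norm hx0⟩

theorem exists_orthonormal_span_eq (K : Submodule ℝ E) [FiniteDimensional ℝ K] {m : ℕ}
    (hK : finrank ℝ K = m) : ∃ e : Fin m → E, Orthonormal ℝ e ∧ span ℝ (range e) = K := by
  let b := (stdOrthonormalBasis ℝ K).reindex (finCongr hK)
  refine ⟨K.subtype ∘ b, K.subtypeₗᵢ.orthonormal_comp_iff.mpr b.orthonormal, ?_⟩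
  rw [range_comp, ← map_span, ← OrthonormalBasis.coe_toBasis, b.toBasis.span_eq,
    Submodule.map_top, range_subtype]

theorem abs_apply_snoc_le_norm {m : ℕ} (φ : E [⋀^Fin (m + 1)]→ₗ[ℝ] ℝ)
    (hφ : ∀ v : Fin (m + 1) → E, Orthonormal ℝ v → |φ v| ≤ 1) {e : Fin m → E}
    (he : Orthonormal ℝ e) {a : E} (ha : a ∈ (span ℝ (range e))ᗮ) : |φ (Fin.snoc e a)| ≤ ‖a‖ := by
  rcases eq_or_ne a 0 with rfl | ha0
  · simp [φ.map_coord_zero (Fin.last m) (Fin.snoc_last _ _)]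
  have hunit : ‖‖a‖⁻¹ • a‖ = 1 := by
    rw [norm_smul, norm_inv, norm_norm, inv_mul_cancel₀ (norm_ne_zero_iff.mpr ha0)]
  have h := hφ _ (orthonormal_snoc he hunit (smul_mem _ _ ha))
  have hsmul : φ (Fin.snoc e (‖a‖⁻¹ • a)) = ‖a‖⁻¹ * φ (Fin.snoc e a) :=
    φ.toMultilinearMap.snoc_smul e _ a
  rwa [hsmul, abs_mul, abs_inv, abs_norm, inv_mul_le_iff₀ (norm_pos_iff.mpr ha0), mul_one] at h

theorem eq_of_apply_snoc_eq_one {m : ℕ} (φ : E [⋀^Fin (m + 1)]→ₗ[ℝ] ℝ)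
    (hφ : ∀ v : Fin (m + 1) → E, Orthonormal ℝ v → |φ v| ≤ 1) {e : Fin m → E}
    (he : Orthonormal ℝ e) {a b : E}
    (ha : a ∈ (span ℝ (range e))ᗮ) (hb : b ∈ (span ℝ (range e))ᗮ) (ha1 : ‖a‖ = 1)
    (hb1 : ‖b‖ = 1) (hφa : φ (Fin.snoc e a) = 1) (hφb : φ (Fin.snoc e b) = 1) : a = b := by
  have hadd : φ (Fin.snoc e (a + b)) = φ (Fin.snoc e a) + φ (Fin.snoc e b) :=
    φ.toMultilinearMap.snoc_add e a b
  have hle := (le_abs_self _).trans (abs_apply_snoc_le_norm φ hφ he (add_mem ha hb))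
  refine eq_of_norm_eq_of_norm_add_eq (ha1.trans hb1.symm) (le_antisymm (norm_add_le a b) ?_)
  linarith

theorem exists_apply_snoc_eq_one {m : ℕ} (φ : E [⋀^Fin (m + 1)]→ₗ[ℝ] ℝ) {e : Fin m → E}
    (he : Orthonormal ℝ e) {p : Fin (m + 1) → E} (hp : Orthonormal ℝ p) (hφp : φ p = 1)
    (hlt : span ℝ (range e) < span ℝ (range p)) :
    ∃ a ∈ span ℝ (range p), a ∈ (span ℝ (range e))ᗮ ∧ ‖a‖ = 1 ∧ φ (Fin.snoc e a) = 1 := by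
  have := FiniteDimensional.span_of_finite ℝ (finite_range e)
  have := FiniteDimensional.span_of_finite ℝ (finite_range p)
  obtain ⟨a, haU, haI, ha1⟩ := exists_mem_orthogonal_norm_eq_one_of_lt hlt
  have hsnoc := orthonormal_snoc he ha1 haI
  have hspan : span ℝ (range (Fin.snoc e a)) = span ℝ (range p) := by
    refine eq_of_le_of_finrank_eq ?_ ?_
    · rw [Fin.range_snoc, span_insert]
      exact sup_le ((span_singleton_le_iff_mem _ _).mpr haU) hlt.le
    · rw [finrank_span_eq_card hsnoc.linearIndependent, finrank_span_eq_card hp.linearIndependent]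
  obtain ⟨d, hd, hφd⟩ := exists_abs_eq_one_forall_alternatingMap_eq_mul hp hsnoc hspan.symm
  have hsmul : φ (Fin.snoc e (d • a)) = d * φ (Fin.snoc e a) :=
    φ.toMultilinearMap.snoc_smul e d a
  -- `φ (snoc e a) = d = ±1`, so rescaling by `d` fixes the sign.
  refine ⟨d • a, smul_mem _ _ haU, smul_mem _ _ haI, ?_, ?_⟩
  · rw [norm_smul, Real.norm_eq_abs, hd, ha1, one_mul]
  rw [hsmul, hφd, hφp, mul_one, ← abs_mul_abs_self, hd, one_mul]

theorem intersecting_planes_rigidity_general {n k : ℕ}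
    (φ : AlternatingMap ℝ (EuclideanSpace ℝ (Fin n)) ℝ (Fin k))
    (hcomass : ∀ v : Fin k → EuclideanSpace ℝ (Fin n), Orthonormal ℝ v → |φ v| ≤ 1)
    (u w : Fin k → EuclideanSpace ℝ (Fin n))
    (hu : Orthonormal ℝ u) (hw : Orthonormal ℝ w)
    (hφu : φ u = 1) (hφw : φ w = 1)
    (hdim : k - 1 ≤ Module.finrank ℝ
      ↥(Submodule.span ℝ (Set.range u) ⊓ Submodule.span ℝ (Set.range w))) :
    Submodule.span ℝ (Set.range u) = Submodule.span ℝ (Set.range w) ∧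
      ExteriorAlgebra.ιMulti ℝ k u = ExteriorAlgebra.ιMulti ℝ k w := by
  set U := span ℝ (range u)
  set W := span ℝ (range w)
  have hU : finrank ℝ U = k := by simpa using finrank_span_eq_card hu.linearIndependent
  have hW : finrank ℝ W = k := by simpa using finrank_span_eq_card hw.linearIndependent
  have hUW : U = W := by
    suffices hI : finrank ℝ ↥(U ⊓ W) = k from
      (eq_of_le_of_finrank_eq inf_le_left (hI.trans hU.symm)).symm.trans
        (eq_of_le_of_finrank_eq inf_le_right (hI.trans hW.symm))
    by_contra hI
    have hIU : finrank ℝ ↥(U ⊓ W) < finrank ℝ U :=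
      (Submodule.finrank_mono inf_le_left).lt_of_ne (hU ▸ hI)
    have hIW : finrank ℝ ↥(U ⊓ W) < finrank ℝ W := hW ▸ hU ▸ hIU
    obtain ⟨m, rfl⟩ : ∃ m, k = m + 1 := ⟨k - 1, by omega⟩
    obtain ⟨e, he, hespan⟩ := exists_orthonormal_span_eq (U ⊓ W) (m := m) (by omega)
    obtain ⟨a, haU, haperp, ha1, hφa⟩ := exists_apply_snoc_eq_one φ he hu hφu
      (hespan ▸ lt_of_le_of_finrank_lt_finrank inf_le_left hIU)
    obtain ⟨b, hbW, hbperp, hb1, hφb⟩ := exists_apply_snoc_eq_one φ he hw hφw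
      (hespan ▸ lt_of_le_of_finrank_lt_finrank inf_le_right hIW)
    have hab : a = b := eq_of_apply_snoc_eq_one φ hcomass he haperp hbperp ha1 hb1 hφa hφb
    have haI : a ∈ span ℝ (range e) := hespan ▸ ⟨haU, hab ▸ hbW⟩
    have ha0 : a = 0 := inner_self_eq_zero.mp (inner_right_of_mem_orthogonal haI haperp)
    simp [ha0] at ha1
  obtain ⟨d, -, hd⟩ := exists_abs_eq_one_forall_alternatingMap_eq_mul hu hw hUW
  have hd1 : d = 1 := by simpa [hφu, hφw] using (hd φ).symm
  refine ⟨hUW, ?_⟩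
  simpa [hd1] using
    (AlternatingMap.apply_eq_smul_apply_of_forall_scalar hd (ExteriorAlgebra.ιMulti ℝ k)).symm

/-- **Intersecting Planes Lemma** (rigidity of contact planes).
Let `φ` be a `k`-covector on `ℝⁿ` (`1 ≤ k ≤ n`) of comass at most one, and let
`u`, `w` be orthonormal `k`-tuples with `φ u = 1` and `φ w = 1`. If the intersection
of the spans of `u` and `w` has dimension at least `k - 1`, then the spans coincide
and moreover `u₁ ∧ ⋯ ∧ u_k = w₁ ∧ ⋯ ∧ w_k` in the exterior algebra of `ℝⁿ`
(the two oriented `k`-planes coincide). -/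
theorem intersecting_planes_rigidity {n k : ℕ} (hk : 1 ≤ k) (hkn : k ≤ n)
    (φ : AlternatingMap ℝ (EuclideanSpace ℝ (Fin n)) ℝ (Fin k))
    (hcomass : ∀ v : Fin k → EuclideanSpace ℝ (Fin n), Orthonormal ℝ v → |φ v| ≤ 1)
    (u w : Fin k → EuclideanSpace ℝ (Fin n))
    (hu : Orthonormal ℝ u) (hw : Orthonormal ℝ w)
    (hφu : φ u = 1) (hφw : φ w = 1)
    (hdim : k - 1 ≤ Module.finrank ℝ
      ↥(Submodule.span ℝ (Set.range u) ⊓ Submodule.span ℝ (Set.range w))) :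
    Submodule.span ℝ (Set.range u) = Submodule.span ℝ (Set.range w) ∧
      ExteriorAlgebra.ιMulti ℝ k u = ExteriorAlgebra.ιMulti ℝ k w :=
  intersecting_planes_rigidity_general φ hcomass u w hu hw hφu hφw hdim
end

section
/- Weak closedness of the piecewise-constant calibrating form of the four-corners example (Example 4.7): Let Q = (−1,1)² ⊂ ℝ² and define the measurable 1-form α = α₁ dx + α₂ dy on Q by (α₁, α₂) = (0, −1) on the open triangle {(x,y) : 0 < x < 1, |y| < x}, (α₁, α₂) = (1, 0) on {(x,y) : −1 < y < 0, |x| < −y}, (α₁, α₂) = (0, 1) on {(x,y) : −1 < x < 0, |y| < −x}, and (α₁, α₂) = (−1, 0) on {(x,y) : 0 < y < 1, |x| < y} (and arbitrarily, say 0, on the null set of the two diagonals). Then α is weakly closed in Q: for every smooth compactly supported function ψ : ℝ² → ℝ with support contained in Q, ∫_Q ( α₂(x,y) ∂ψ/∂x (x,y) − α₁(x,y) ∂ψ/∂y (x,y) ) dx dy = 0. -/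
open MeasureTheory Set

/-- The square `Q = (-1,1)² ⊂ ℝ²`. -/
def fourCornersSquare : Set (ℝ × ℝ) := Ioo (-1 : ℝ) 1 ×ˢ Ioo (-1 : ℝ) 1

open scoped Classical in
/-- The first component `α₁` of the piecewise-constant calibrating `1`-form
`α = α₁ dx + α₂ dy` of the four-corners example: `(α₁, α₂)` equals `(0, -1)` on the
right triangle, `(1, 0)` on the bottom triangle, `(0, 1)` on the left triangle and
`(-1, 0)` on the top triangle (and `0` on the null set of the two diagonals). -/
noncomputable def fourCornersAlpha1 : ℝ × ℝ → ℝ := fun p =>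
  if 0 < p.1 ∧ p.1 < 1 ∧ |p.2| < p.1 then 0
  else if -1 < p.2 ∧ p.2 < 0 ∧ |p.1| < -p.2 then 1
  else if -1 < p.1 ∧ p.1 < 0 ∧ |p.2| < -p.1 then 0
  else if 0 < p.2 ∧ p.2 < 1 ∧ |p.1| < p.2 then -1
  else 0

open scoped Classical in
/-- The second component `α₂` of the calibrating `1`-form of the four-corners example. -/
noncomputable def fourCornersAlpha2 : ℝ × ℝ → ℝ := fun p =>
  if 0 < p.1 ∧ p.1 < 1 ∧ |p.2| < p.1 then -1
  else if -1 < p.2 ∧ p.2 < 0 ∧ |p.1| < -p.2 then 0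
  else if -1 < p.1 ∧ p.1 < 0 ∧ |p.2| < -p.1 then 1
  else if 0 < p.2 ∧ p.2 < 1 ∧ |p.1| < p.2 then 0
  else 0

/-- the "left" region, where `α₂ = 1`. -/
private def fcTL : Set (ℝ × ℝ) := {q | -1 < q.1 ∧ q.1 < -|q.2|}
/-- the "right" region, where `α₂ = -1`. -/
private def fcTR : Set (ℝ × ℝ) := {q | |q.2| < q.1 ∧ q.1 < 1}
/-- the "bottom" region, where `α₁ = 1`. -/
private def fcTB : Set (ℝ × ℝ) := {q | -1 < q.2 ∧ q.2 < -|q.1|}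
/-- the "top" region, where `α₁ = -1`. -/
private def fcTT : Set (ℝ × ℝ) := {q | |q.1| < q.2 ∧ q.2 < 1}

private lemma fcTL_open : IsOpen fcTL :=
  (isOpen_lt continuous_const continuous_fst).and
    (isOpen_lt continuous_fst (continuous_abs.comp continuous_snd).neg)

private lemma fcTR_open : IsOpen fcTR :=
  (isOpen_lt (continuous_abs.comp continuous_snd) continuous_fst).and
    (isOpen_lt continuous_fst continuous_const)

private lemma fcTB_open : IsOpen fcTB :=
  (isOpen_lt continuous_const continuous_snd).and
    (isOpen_lt continuous_snd (continuous_abs.comp continuous_fst).neg)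

private lemma fcTT_open : IsOpen fcTT :=
  (isOpen_lt (continuous_abs.comp continuous_fst) continuous_snd).and
    (isOpen_lt continuous_snd continuous_const)

private lemma fcTL_subset : fcTL ⊆ fourCornersSquare := by
  rintro ⟨x, y⟩ hq
  simp only [fcTL, mem_setOf_eq] at hq
  obtain ⟨h1, h2⟩ := hq
  have h0 := abs_nonneg y
  have h3 : -(-x) < y ∧ y < -x := abs_lt.1 (show |y| < -x by linarith)
  exact ⟨⟨h1, by linarith⟩, ⟨by linarith [h3.1], by linarith [h3.2]⟩⟩

private lemma fcTR_subset : fcTR ⊆ fourCornersSquare := by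
  rintro ⟨x, y⟩ hq
  simp only [fcTR, mem_setOf_eq] at hq
  obtain ⟨h1, h2⟩ := hq
  have h0 := abs_nonneg y
  have h3 : -x < y ∧ y < x := abs_lt.1 h1
  exact ⟨⟨by linarith, h2⟩, ⟨by linarith [h3.1], by linarith [h3.2]⟩⟩

private lemma fcTB_subset : fcTB ⊆ fourCornersSquare := by
  rintro ⟨x, y⟩ hq
  simp only [fcTB, mem_setOf_eq] at hq
  obtain ⟨h1, h2⟩ := hq
  have h0 := abs_nonneg x
  have h3 : -(-y) < x ∧ x < -y := abs_lt.1 (show |x| < -y by linarith)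
  exact ⟨⟨by linarith [h3.1], by linarith [h3.2]⟩, ⟨h1, by linarith⟩⟩

private lemma fcTT_subset : fcTT ⊆ fourCornersSquare := by
  rintro ⟨x, y⟩ hq
  simp only [fcTT, mem_setOf_eq] at hq
  obtain ⟨h1, h2⟩ := hq
  have h0 := abs_nonneg x
  have h3 : -y < x ∧ x < y := abs_lt.1 h1
  exact ⟨⟨by linarith [h3.1], by linarith [h3.2]⟩, ⟨by linarith, h2⟩⟩

set_option maxHeartbeats 1600000 in
private lemma alpha2_eq (p : ℝ × ℝ) :
    fourCornersAlpha2 p = fcTL.indicator (fun _ => (1 : ℝ)) p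
      - fcTR.indicator (fun _ => (1 : ℝ)) p := by
  obtain ⟨x, y⟩ := p
  simp only [fourCornersAlpha2, fcTL, fcTR, indicator_apply, mem_setOf_eq]
  split_ifs
  all_goals
    first
    | (norm_num; done)
    | (exfalso; (try simp only [not_and_or, not_lt] at *); casesm* _ ∨ _, _ ∧ _ <;>
        linarith [abs_nonneg x, abs_nonneg y, le_abs_self x, le_abs_self y, neg_abs_le x,
          neg_abs_le y])

set_option maxHeartbeats 1600000 in
private lemma alpha1_eq (p : ℝ × ℝ) :
    fourCornersAlpha1 p = fcTB.indicator (fun _ => (1 : ℝ)) p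
      - fcTT.indicator (fun _ => (1 : ℝ)) p := by
  obtain ⟨x, y⟩ := p
  simp only [fourCornersAlpha1, fcTB, fcTT, indicator_apply, mem_setOf_eq]
  split_ifs
  all_goals
    first
    | (norm_num; done)
    | (exfalso; (try simp only [not_and_or, not_lt] at *); casesm* _ ∨ _, _ ∧ _ <;>
        linarith [abs_nonneg x, abs_nonneg y, le_abs_self x, le_abs_self y, neg_abs_le x,
          neg_abs_le y])

/-- fundamental theorem of calculus on an open interval. -/
private lemma fc_ftc {f f' : ℝ → ℝ} (hd : ∀ x, HasDerivAt f (f' x) x)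
    (hc : Continuous f') {a b : ℝ} (hab : a ≤ b) :
    ∫ x in Ioo a b, f' x = f b - f a := by
  rw [← integral_Ioc_eq_integral_Ioo, ← intervalIntegral.integral_of_le hab]
  exact intervalIntegral.integral_eq_sub_of_hasDerivAt (fun x _ => hd x)
    (hc.intervalIntegrable a b)

/-- **Weak closedness of the piecewise-constant calibrating form of the four-corners
example** (Example 4.7): the distributional exterior derivative of
`α = α₁ dx + α₂ dy` vanishes on `Q = (-1,1)²`, i.e.
`∫_Q (α₂ ∂ψ/∂x - α₁ ∂ψ/∂y) = 0` for every smooth `ψ` compactly supported in `Q`. -/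
theorem fourCorners_weakly_closed (ψ : ℝ × ℝ → ℝ) (hψ : ContDiff ℝ (⊤ : ℕ∞) ψ)
    (hcpt : HasCompactSupport ψ) (hsupp : tsupport ψ ⊆ fourCornersSquare) :
    ∫ p in fourCornersSquare,
      (fourCornersAlpha2 p * fderiv ℝ ψ p (1, 0)
        - fourCornersAlpha1 p * fderiv ℝ ψ p (0, 1)) = 0 := by
  have hψc : Continuous ψ := hψ.continuous
  have hdiff : Differentiable ℝ ψ := hψ.differentiable (by simp)
  have hDc : Continuous (fderiv ℝ ψ) := hψ.continuous_fderiv (by simp)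
  have hD1c : Continuous fun p : ℝ × ℝ => fderiv ℝ ψ p (1, 0) :=
    hDc.clm_apply continuous_const
  have hD2c : Continuous fun p : ℝ × ℝ => fderiv ℝ ψ p (0, 1) :=
    hDc.clm_apply continuous_const
  have hψ0 : ∀ p, p ∉ fourCornersSquare → ψ p = 0 := fun p hp =>
    image_eq_zero_of_notMem_tsupport fun h => hp (hsupp h)
  have hD1K : HasCompactSupport fun p : ℝ × ℝ => fderiv ℝ ψ p (1, 0) :=
    hcpt.fderiv_apply ℝ _
  have hD2K : HasCompactSupport fun p : ℝ × ℝ => fderiv ℝ ψ p (0, 1) :=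
    hcpt.fderiv_apply ℝ _
  have hD1int : Integrable (fun p : ℝ × ℝ => fderiv ℝ ψ p (1, 0)) :=
    hD1c.integrable_of_hasCompactSupport hD1K
  have hD2int : Integrable (fun p : ℝ × ℝ => fderiv ℝ ψ p (0, 1)) :=
    hD2c.integrable_of_hasCompactSupport hD2K
  -- the two halves of the integrand, rewritten with indicators
  have hf2eq : (fun p : ℝ × ℝ => fourCornersAlpha2 p * fderiv ℝ ψ p (1, 0))
      = fun p => fcTL.indicator (fun q => fderiv ℝ ψ q (1, 0)) p
        - fcTR.indicator (fun q => fderiv ℝ ψ q (1, 0)) p := by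
    funext p
    rw [alpha2_eq]
    by_cases h1 : p ∈ fcTL <;> by_cases h2 : p ∈ fcTR <;>
      simp [indicator_apply, h1, h2] <;> ring
  have hf1eq : (fun p : ℝ × ℝ => fourCornersAlpha1 p * fderiv ℝ ψ p (0, 1))
      = fun p => fcTB.indicator (fun q => fderiv ℝ ψ q (0, 1)) p
        - fcTT.indicator (fun q => fderiv ℝ ψ q (0, 1)) p := by
    funext p
    rw [alpha1_eq]
    by_cases h1 : p ∈ fcTB <;> by_cases h2 : p ∈ fcTT <;>
      simp [indicator_apply, h1, h2] <;> ring
  have hf2int : Integrable (fun p : ℝ × ℝ =>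
      fourCornersAlpha2 p * fderiv ℝ ψ p (1, 0)) := by
    rw [hf2eq]
    exact (hD1int.indicator fcTL_open.measurableSet).sub
      (hD1int.indicator fcTR_open.measurableSet)
  have hf1int : Integrable (fun p : ℝ × ℝ =>
      fourCornersAlpha1 p * fderiv ℝ ψ p (0, 1)) := by
    rw [hf1eq]
    exact (hD2int.indicator fcTB_open.measurableSet).sub
      (hD2int.indicator fcTT_open.measurableSet)
  -- partial derivatives along slices
  have hd1 : ∀ (y x : ℝ), HasDerivAt (fun x => ψ (x, y)) (fderiv ℝ ψ (x, y) (1, 0)) x := by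
    intro y x
    have h1 : HasDerivAt (fun x : ℝ => (x, y)) ((1 : ℝ), (0 : ℝ)) x :=
      HasDerivAt.prodMk (hasDerivAt_id x) (hasDerivAt_const x y)
    exact (hdiff (x, y)).hasFDerivAt.comp_hasDerivAt x h1
  have hd2 : ∀ (x y : ℝ), HasDerivAt (fun y => ψ (x, y)) (fderiv ℝ ψ (x, y) (0, 1)) y := by
    intro x y
    have h1 : HasDerivAt (fun y : ℝ => (x, y)) ((0 : ℝ), (1 : ℝ)) y :=
      HasDerivAt.prodMk (hasDerivAt_const y x) (hasDerivAt_id y)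
    exact (hdiff (x, y)).hasFDerivAt.comp_hasDerivAt y h1
  -- inner integral for the α₂ part
  have int2 : ∀ y : ℝ, (∫ x, fourCornersAlpha2 (x, y) * fderiv ℝ ψ (x, y) (1, 0))
      = ψ (-|y|, y) + ψ (|y|, y) := by
    intro y
    have hcont : Continuous fun x => fderiv ℝ ψ (x, y) (1, 0) :=
      hD1c.comp (continuous_id.prodMk continuous_const)
    have hsl : (fun x => fourCornersAlpha2 (x, y) * fderiv ℝ ψ (x, y) (1, 0))
        = fun x => (Ioo (-1 : ℝ) (-|y|)).indicator (fun x => fderiv ℝ ψ (x, y) (1, 0)) x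
          - (Ioo (|y|) 1).indicator (fun x => fderiv ℝ ψ (x, y) (1, 0)) x := by
      funext x
      have hmemL : ((x, y) ∈ fcTL) ↔ x ∈ Ioo (-1 : ℝ) (-|y|) := Iff.rfl
      have hmemR : ((x, y) ∈ fcTR) ↔ x ∈ Ioo (|y|) 1 := Iff.rfl
      rw [alpha2_eq]
      by_cases h1 : x ∈ Ioo (-1 : ℝ) (-|y|) <;> by_cases h2 : x ∈ Ioo (|y|) 1 <;>
        simp [indicator_apply, hmemL, hmemR, h1, h2] <;> ring
    have hintL : Integrable ((Ioo (-1 : ℝ) (-|y|)).indicator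
        fun x => fderiv ℝ ψ (x, y) (1, 0)) := by
      refine (IntegrableOn.integrable_indicator ?_ measurableSet_Ioo)
      exact (hcont.integrableOn_Icc).mono_set Ioo_subset_Icc_self
    have hintR : Integrable ((Ioo (|y|) (1 : ℝ)).indicator
        fun x => fderiv ℝ ψ (x, y) (1, 0)) := by
      refine (IntegrableOn.integrable_indicator ?_ measurableSet_Ioo)
      exact (hcont.integrableOn_Icc).mono_set Ioo_subset_Icc_self
    rw [hsl, integral_sub hintL hintR, integral_indicator measurableSet_Ioo,
      integral_indicator measurableSet_Ioo]
    by_cases hy : |y| ≤ 1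
    · rw [fc_ftc (hd1 y) hcont (by linarith [abs_nonneg y]),
        fc_ftc (hd1 y) hcont hy]
      have h1 : ψ (-1, y) = 0 := hψ0 _ (by simp [fourCornersSquare])
      have h2 : ψ (1, y) = 0 := hψ0 _ (by simp [fourCornersSquare])
      rw [h1, h2]; ring
    · push_neg at hy
      rw [Ioo_eq_empty (by push_neg; linarith), Ioo_eq_empty (by push_neg; linarith)]
      have h1 : ψ (-|y|, y) = 0 := hψ0 _ (by
        simp only [fourCornersSquare, mem_prod, mem_Ioo]
        rintro ⟨⟨ha1, ha2⟩, hb1, hb2⟩; linarith)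
      have h2 : ψ (|y|, y) = 0 := hψ0 _ (by
        simp only [fourCornersSquare, mem_prod, mem_Ioo]
        rintro ⟨⟨ha1, ha2⟩, hb1, hb2⟩; linarith)
      simp [h1, h2]
  -- inner integral for the α₁ part
  have int1 : ∀ x : ℝ, (∫ y, fourCornersAlpha1 (x, y) * fderiv ℝ ψ (x, y) (0, 1))
      = ψ (x, -|x|) + ψ (x, |x|) := by
    intro x
    have hcont : Continuous fun y => fderiv ℝ ψ (x, y) (0, 1) :=
      hD2c.comp (continuous_const.prodMk continuous_id)
    have hsl : (fun y => fourCornersAlpha1 (x, y) * fderiv ℝ ψ (x, y) (0, 1))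
        = fun y => (Ioo (-1 : ℝ) (-|x|)).indicator (fun y => fderiv ℝ ψ (x, y) (0, 1)) y
          - (Ioo (|x|) 1).indicator (fun y => fderiv ℝ ψ (x, y) (0, 1)) y := by
      funext y
      have hmemB : ((x, y) ∈ fcTB) ↔ y ∈ Ioo (-1 : ℝ) (-|x|) := Iff.rfl
      have hmemT : ((x, y) ∈ fcTT) ↔ y ∈ Ioo (|x|) 1 := Iff.rfl
      rw [alpha1_eq]
      by_cases h1 : y ∈ Ioo (-1 : ℝ) (-|x|) <;> by_cases h2 : y ∈ Ioo (|x|) 1 <;>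
        simp [indicator_apply, hmemB, hmemT, h1, h2] <;> ring
    have hintB : Integrable ((Ioo (-1 : ℝ) (-|x|)).indicator
        fun y => fderiv ℝ ψ (x, y) (0, 1)) := by
      refine (IntegrableOn.integrable_indicator ?_ measurableSet_Ioo)
      exact (hcont.integrableOn_Icc).mono_set Ioo_subset_Icc_self
    have hintT : Integrable ((Ioo (|x|) (1 : ℝ)).indicator
        fun y => fderiv ℝ ψ (x, y) (0, 1)) := by
      refine (IntegrableOn.integrable_indicator ?_ measurableSet_Ioo)
      exact (hcont.integrableOn_Icc).mono_set Ioo_subset_Icc_self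
    rw [hsl, integral_sub hintB hintT, integral_indicator measurableSet_Ioo,
      integral_indicator measurableSet_Ioo]
    by_cases hx : |x| ≤ 1
    · rw [fc_ftc (hd2 x) hcont (by linarith [abs_nonneg x]),
        fc_ftc (hd2 x) hcont hx]
      have h1 : ψ (x, -1) = 0 := hψ0 _ (by simp [fourCornersSquare])
      have h2 : ψ (x, 1) = 0 := hψ0 _ (by simp [fourCornersSquare])
      rw [h1, h2]; ring
    · push_neg at hx
      rw [Ioo_eq_empty (by push_neg; linarith), Ioo_eq_empty (by push_neg; linarith)]
      have h1 : ψ (x, -|x|) = 0 := hψ0 _ (by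
        simp only [fourCornersSquare, mem_prod, mem_Ioo]
        rintro ⟨⟨ha1, ha2⟩, hb1, hb2⟩; linarith)
      have h2 : ψ (x, |x|) = 0 := hψ0 _ (by
        simp only [fourCornersSquare, mem_prod, mem_Ioo]
        rintro ⟨⟨ha1, ha2⟩, hb1, hb2⟩; linarith)
      simp [h1, h2]
  -- the integrand vanishes off the square
  have hvanish : ∀ p, p ∉ fourCornersSquare →
      fourCornersAlpha2 p * fderiv ℝ ψ p (1, 0)
        - fourCornersAlpha1 p * fderiv ℝ ψ p (0, 1) = 0 := by
    intro p hp
    have h2 : fourCornersAlpha2 p = 0 := by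
      rw [alpha2_eq, indicator_of_notMem (fun h => hp (fcTL_subset h)),
        indicator_of_notMem (fun h => hp (fcTR_subset h))]
      ring
    have h1 : fourCornersAlpha1 p = 0 := by
      rw [alpha1_eq, indicator_of_notMem (fun h => hp (fcTB_subset h)),
        indicator_of_notMem (fun h => hp (fcTT_subset h))]
      ring
    rw [h1, h2]; ring
  rw [setIntegral_eq_integral_of_forall_compl_eq_zero hvanish]
  rw [integral_sub hf2int hf1int]
  -- Fubini
  have hfub2 : (∫ p : ℝ × ℝ, fourCornersAlpha2 p * fderiv ℝ ψ p (1, 0))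
      = ∫ y, ψ (-|y|, y) + ψ (|y|, y) := by
    rw [show (volume : Measure (ℝ × ℝ)) = volume.prod volume from Measure.volume_eq_prod ℝ ℝ] at hf2int ⊢
    rw [integral_prod_symm _ hf2int]
    exact integral_congr_ae (Filter.Eventually.of_forall int2)
  have hfub1 : (∫ p : ℝ × ℝ, fourCornersAlpha1 p * fderiv ℝ ψ p (0, 1))
      = ∫ x, ψ (x, -|x|) + ψ (x, |x|) := by
    rw [show (volume : Measure (ℝ × ℝ)) = volume.prod volume from Measure.volume_eq_prod ℝ ℝ] at hf1int ⊢
    rw [integral_prod _ hf1int]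
    exact integral_congr_ae (Filter.Eventually.of_forall int1)
  rw [hfub1, hfub2]
  -- final symmetry argument
  set g : ℝ → ℝ := fun y => ψ (-|y|, y) + ψ (|y|, y) with hg
  set h : ℝ → ℝ := fun x => ψ (x, -|x|) + ψ (x, |x|) with hh
  have hgc : Continuous g :=
    (hψc.comp (continuous_abs.neg.prodMk continuous_id)).add
      (hψc.comp (continuous_abs.prodMk continuous_id))
  have hhc : Continuous h :=
    (hψc.comp (continuous_id.prodMk continuous_abs.neg)).add
      (hψc.comp (continuous_id.prodMk continuous_abs))
  have hbig : ∀ (f : ℝ → ℝ), Continuous f → (∀ y, 1 < |y| → f y = 0) → Integrable f := by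
    intro f hc h0
    refine hc.integrable_of_hasCompactSupport
      (HasCompactSupport.intro (isCompact_Icc (a := (-1 : ℝ)) (b := 1)) fun y hy => ?_)
    apply h0
    simp only [mem_Icc, not_and_or, not_le] at hy
    rcases hy with hy | hy
    · rw [abs_of_neg (by linarith)]; linarith
    · rw [abs_of_pos (by linarith)]; linarith
  have hg0 : ∀ y, 1 < |y| → g y = 0 := by
    intro y hy
    have h1 : ψ (-|y|, y) = 0 := hψ0 _ (by
      simp only [fourCornersSquare, mem_prod, mem_Ioo]
      rintro ⟨⟨ha1, ha2⟩, hb1, hb2⟩; linarith)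
    have h2 : ψ (|y|, y) = 0 := hψ0 _ (by
      simp only [fourCornersSquare, mem_prod, mem_Ioo]
      rintro ⟨⟨ha1, ha2⟩, hb1, hb2⟩; linarith)
    simp [hg, h1, h2]
  have hh0 : ∀ x, 1 < |x| → h x = 0 := by
    intro x hx
    have h1 : ψ (x, -|x|) = 0 := hψ0 _ (by
      simp only [fourCornersSquare, mem_prod, mem_Ioo]
      rintro ⟨⟨ha1, ha2⟩, hb1, hb2⟩; linarith)
    have h2 : ψ (x, |x|) = 0 := hψ0 _ (by
      simp only [fourCornersSquare, mem_prod, mem_Ioo]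
      rintro ⟨⟨ha1, ha2⟩, hb1, hb2⟩; linarith)
    simp [hh, h1, h2]
  have hgint : Integrable g := hbig g hgc hg0
  have hhint : Integrable h := hbig h hhc hh0
  have hgnint : Integrable fun y => g (-y) :=
    hbig _ (hgc.comp continuous_neg) (fun y hy => hg0 (-y) (by rwa [abs_neg]))
  have hhnint : Integrable fun y => h (-y) :=
    hbig _ (hhc.comp continuous_neg) (fun y hy => hh0 (-y) (by rwa [abs_neg]))
  have hkey : ∀ y, g y + g (-y) = h y + h (-y) := by
    intro y
    simp only [hg, hh, abs_neg]
    rcases le_or_gt 0 y with hy | hy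
    · rw [abs_of_nonneg hy]; ring
    · rw [abs_of_neg hy]; ring
  have e1 : (∫ y, g y) + (∫ y, g (-y)) = (∫ y, h y) + (∫ y, h (-y)) := by
    rw [← integral_add hgint hgnint, ← integral_add hhint hhnint]
    exact integral_congr_ae (Filter.Eventually.of_forall hkey)
  have e2 : (∫ y, g (-y)) = ∫ y, g y := integral_neg_eq_self g volume
  have e3 : (∫ y, h (-y)) = ∫ y, h y := integral_neg_eq_self h volume
  rw [e2, e3] at e1
  linarith
end
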